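/- Let Φ : ℝ^d ⇒ ℝ^ℓ be a cusco map. Then the map m(Φ) is cusco and satisfies, for all x̄ ∈ ℝ^d, m(Φ)(x̄) ⊆ ⋂_{δ>0} clco Φ(B_δ(x̄)) ⊆ Φ(x̄). -/

import Mathlib

open MeasureTheory Metric Filter Set Topology

noncomputable section

/-- `ℝ^n` with the Euclidean structure. -/
abbrev Euc (n : ℕ) : Type := EuclideanSpace ℝ (Fin n)

/-- Closed convex hull of a set. -/
def clco {n : ℕ} (A : Set (Euc n)) : Set (Euc n) := closure (convexHull ℝ A)

/-- A function is locally bounded. -/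
def LocBdd {d l : ℕ} (f : Euc d → Euc l) : Prop :=
  ∀ x : Euc d, ∃ δ > (0 : ℝ), ∃ C : ℝ, ∀ y ∈ Metric.ball x δ, ‖f y‖ ≤ C

/-- The Filippov regularization of `f`. -/
def FilippovReg {d l : ℕ} (f : Euc d → Euc l) (x : Euc d) : Set (Euc l) :=
  ⋂ (N : Set (Euc d)) (_ : volume N = 0) (δ : ℝ) (_ : 0 < δ),
    clco (f '' (Metric.ball x δ \ N))

/-- The Krasovskii regularization of `f`. -/
def KrasovskiiReg {d l : ℕ} (f : Euc d → Euc l) (x : Euc d) : Set (Euc l) :=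
  ⋂ (δ : ℝ) (_ : 0 < δ), clco (f '' Metric.ball x δ)

/-- A set-valued map is cusco: upper semicontinuous with nonempty compact convex values. -/
def IsCusco {d l : ℕ} (Φ : Euc d → Set (Euc l)) : Prop :=
  (∀ x : Euc d, ∀ U : Set (Euc l), IsOpen U → Φ x ⊆ U →
      ∃ δ > (0 : ℝ), ∀ y ∈ Metric.ball x δ, Φ y ⊆ U) ∧
  ∀ x : Euc d, (Φ x).Nonempty ∧ IsCompact (Φ x) ∧ Convex ℝ (Φ x)

/-- The "minimal" map `m(Φ)` associated to a set-valued map `Φ`. -/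
def mPhi {d l : ℕ} (Φ : Euc d → Set (Euc l)) (x : Euc d) : Set (Euc l) :=
  ⋂ (N : Set (Euc d)) (_ : volume N = 0) (δ : ℝ) (_ : 0 < δ),
    clco (⋃ a ∈ Metric.ball x δ \ N, Φ a)

/-- A point of approximate continuity of `f`. -/
def ApproxContAt {d l : ℕ} (f : Euc d → Euc l) (x : Euc d) : Prop :=
  ∀ ε > (0 : ℝ),
    Tendsto (fun δ : ℝ =>
        volume {y ∈ Metric.ball x δ | ε ≤ ‖f y - f x‖} / volume (Metric.ball x δ))
      (𝓝[>] 0) (𝓝 0)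

/-- A cusco map is Filippov representable if it is the Filippov regularization
of some locally bounded measurable function. -/
def FilippovRepresentable {d l : ℕ} (Φ : Euc d → Set (Euc l)) : Prop :=
  ∃ f : Euc d → Euc l, Measurable f ∧ LocBdd f ∧ ∀ x, Φ x = FilippovReg f x

/-!
Write `m(Φ)(x)` as the intersection of the closed convex sets `clco Φ(B_δ(x) \ N)`. This family
is directed (take `N ∪ N'` and `min δ δ'`), each member is nonempty because `B_δ(x) \ N` has
positive measure, and by upper semicontinuity of `Φ` some member is compact, lying in the
bounded set `cthickening 1 (Φ x)`. Compactness then gives nonemptiness of the intersection, and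
also that it lies in an open `U` only if a single member `clco Φ(B_δ(x) \ N)` does; that member
contains `m(Φ)(y)` for every `y ∈ B_{δ/2}(x)`, which is upper semicontinuity of `m(Φ)`. Taking
`N = ∅` gives the first inclusion, and the second is upper semicontinuity of `Φ` together with
convexity and closedness of `Φ x`.
-/

section DirectedClosed

variable {X ι : Type*} [TopologicalSpace X] {Z : ι → Set X}

theorem Directed.exists_subset_of_isCompact (hdir : Directed (· ⊇ ·) Z)
    (hcl : ∀ i, IsClosed (Z i)) {i₀ : ι} (hc : IsCompact (Z i₀)) {U : Set X} (hU : IsOpen U)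
    (h : ⋂ i, Z i ⊆ U) : ∃ i, Z i ⊆ U := by
  have : Nonempty ι := ⟨i₀⟩
  obtain ⟨i, hi⟩ := (hc.diff hU).elim_directed_family_closed Z hcl
    (eq_empty_iff_forall_notMem.2 fun z ⟨⟨_, hzU⟩, hz⟩ => hzU (h hz)) hdir
  obtain ⟨j, hj₀, hj⟩ := hdir i₀ i
  refine ⟨j, fun z hz => by_contra fun hzU => ?_⟩
  exact (eq_empty_iff_forall_notMem.1 hi) z ⟨⟨hj₀ hz, hzU⟩, hj hz⟩

theorem Directed.nonempty_iInter_of_isCompact (hdir : Directed (· ⊇ ·) Z)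
    (hcl : ∀ i, IsClosed (Z i)) (hne : ∀ i, (Z i).Nonempty) {i₀ : ι} (hc : IsCompact (Z i₀)) :
    (⋂ i, Z i).Nonempty := by
  by_contra hempty
  obtain ⟨i, hi⟩ := hdir.exists_subset_of_isCompact hcl hc isOpen_empty
    (not_nonempty_iff_eq_empty.1 hempty).subset
  exact (hne i).ne_empty (subset_empty_iff.1 hi)

end DirectedClosed

lemma clco_mono {n : ℕ} {A B : Set (Euc n)} (h : A ⊆ B) : clco A ⊆ clco B :=
  closure_mono (convexHull_mono h)

lemma isClosed_clco {n : ℕ} (A : Set (Euc n)) : IsClosed (clco A) := isClosed_closure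

lemma convex_clco {n : ℕ} (A : Set (Euc n)) : Convex ℝ (clco A) :=
  (convex_convexHull ℝ A).closure

namespace IsCusco

variable {d l : ℕ} {Φ : Euc d → Set (Euc l)}

lemma clco_ball_subset_cthickening (hΦ : IsCusco Φ) (x : Euc d) {ε : ℝ} (hε : 0 < ε) :
    ∃ δ > 0, clco (⋃ a ∈ ball x δ, Φ a) ⊆ cthickening ε (Φ x) := by
  obtain ⟨δ, hδ, hball⟩ := hΦ.1 x (thickening ε (Φ x)) isOpen_thickening
    (self_subset_thickening hε _)
  refine ⟨δ, hδ, ?_⟩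
  calc clco (⋃ a ∈ ball x δ, Φ a)
      ⊆ closure (thickening ε (Φ x)) :=
        closure_mono (convexHull_min (iUnion₂_subset hball) ((hΦ.2 x).2.2.thickening ε))
    _ ⊆ cthickening ε (Φ x) := closure_thickening_subset_cthickening ε _

lemma exists_isCompact_clco_ball (hΦ : IsCusco Φ) (x : Euc d) :
    ∃ δ > 0, IsCompact (clco (⋃ a ∈ ball x δ, Φ a)) := by
  obtain ⟨δ, hδ, hsub⟩ := hΦ.clco_ball_subset_cthickening x one_pos
  exact ⟨δ, hδ, isCompact_of_isClosed_isBounded (isClosed_clco _)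
    ((hΦ.2 x).2.1.isBounded.cthickening.subset hsub)⟩

lemma iInter_clco_ball_subset (hΦ : IsCusco Φ) (x : Euc d) :
    ⋂ (δ : ℝ) (_ : 0 < δ), clco (⋃ a ∈ ball x δ, Φ a) ⊆ Φ x := by
  rw [← (hΦ.2 x).2.1.isClosed.closure_eq, closure_eq_iInter_cthickening]
  refine subset_iInter₂ fun ε hε => ?_
  obtain ⟨δ, hδ, hsub⟩ := hΦ.clco_ball_subset_cthickening x hε
  exact (biInter_subset_of_mem (show δ ∈ Ioi 0 from hδ)).trans hsub

end IsCusco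

structure NullExcision (d : ℕ) where
  N : Set (Euc d)
  δ : ℝ
  volume_N : volume N = 0
  δ_pos : 0 < δ

section Excision

variable {d l : ℕ} (Φ : Euc d → Set (Euc l))

def essHull (x : Euc d) (p : NullExcision d) : Set (Euc l) :=
  clco (⋃ a ∈ ball x p.δ \ p.N, Φ a)

lemma essHull_of_empty (x : Euc d) {δ : ℝ} (hδ : 0 < δ) :
    essHull Φ x ⟨∅, δ, measure_empty, hδ⟩ = clco (⋃ a ∈ ball x δ, Φ a) := by
  simp only [essHull, sdiff_empty]

lemma mPhi_eq_iInter_essHull (x : Euc d) : mPhi Φ x = ⋂ p, essHull Φ x p := by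
  ext z
  simp only [mPhi, essHull, mem_iInter]
  exact ⟨fun hz p => hz p.N p.volume_N p.δ p.δ_pos, fun hz N hN δ hδ => hz ⟨N, δ, hN, hδ⟩⟩

lemma mPhi_subset_essHull (x : Euc d) (p : NullExcision d) : mPhi Φ x ⊆ essHull Φ x p :=
  (mPhi_eq_iInter_essHull Φ x).trans_subset (iInter_subset _ p)

lemma essHull_subset_essHull {x y : Euc d} {p q : NullExcision d} (hN : p.N ⊆ q.N)
    (hball : ball y q.δ ⊆ ball x p.δ) : essHull Φ y q ⊆ essHull Φ x p :=
  clco_mono (biUnion_subset_biUnion_left (sdiff_subset_sdiff hball hN))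

lemma directed_essHull (x : Euc d) : Directed (· ⊇ ·) (essHull Φ x) := fun p q =>
  ⟨⟨p.N ∪ q.N, min p.δ q.δ, measure_union_null p.volume_N q.volume_N, lt_min p.δ_pos q.δ_pos⟩,
    essHull_subset_essHull Φ subset_union_left (ball_subset_ball (min_le_left _ _)),
    essHull_subset_essHull Φ subset_union_right (ball_subset_ball (min_le_right _ _))⟩

lemma essHull_nonempty (hΦ : ∀ a, (Φ a).Nonempty) (x : Euc d) (p : NullExcision d) :
    (essHull Φ x p).Nonempty := by
  obtain ⟨a, ha⟩ : (ball x p.δ \ p.N).Nonempty := by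
    refine nonempty_of_measure_ne_zero (μ := volume) ?_
    rw [measure_sdiff_null p.volume_N]
    exact (measure_ball_pos volume x p.δ_pos).ne'
  obtain ⟨v, hv⟩ := hΦ a
  exact ⟨v, subset_closure (subset_convexHull ℝ _ (mem_biUnion ha hv))⟩

lemma isClosed_mPhi (x : Euc d) : IsClosed (mPhi Φ x) := by
  rw [mPhi_eq_iInter_essHull]
  exact isClosed_iInter fun p => isClosed_clco _

lemma convex_mPhi (x : Euc d) : Convex ℝ (mPhi Φ x) := by
  rw [mPhi_eq_iInter_essHull]
  exact convex_iInter fun p => convex_clco _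

lemma mPhi_subset_iInter_clco_ball (x : Euc d) :
    mPhi Φ x ⊆ ⋂ (δ : ℝ) (_ : 0 < δ), clco (⋃ a ∈ ball x δ, Φ a) :=
  subset_iInter₂ fun _ hδ => essHull_of_empty Φ x hδ ▸ mPhi_subset_essHull Φ x _

end Excision

namespace IsCusco

variable {d l : ℕ} {Φ : Euc d → Set (Euc l)}

lemma exists_isCompact_essHull (hΦ : IsCusco Φ) (x : Euc d) :
    ∃ p, IsCompact (essHull Φ x p) := by
  obtain ⟨δ, hδ, hc⟩ := hΦ.exists_isCompact_clco_ball x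
  exact ⟨_, (essHull_of_empty Φ x hδ).symm ▸ hc⟩

lemma mPhi_nonempty (hΦ : IsCusco Φ) (x : Euc d) : (mPhi Φ x).Nonempty := by
  obtain ⟨p, hp⟩ := hΦ.exists_isCompact_essHull x
  rw [mPhi_eq_iInter_essHull]
  exact (directed_essHull Φ x).nonempty_iInter_of_isCompact (fun _ => isClosed_clco _)
    (essHull_nonempty Φ (fun a => (hΦ.2 a).1) x) hp

lemma mPhi_upperSemicontinuous (hΦ : IsCusco Φ) (x : Euc d) {U : Set (Euc l)} (hU : IsOpen U)
    (hxU : mPhi Φ x ⊆ U) : ∃ δ > 0, ∀ y ∈ ball x δ, mPhi Φ y ⊆ U := by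
  obtain ⟨p₀, hp₀⟩ := hΦ.exists_isCompact_essHull x
  rw [mPhi_eq_iInter_essHull] at hxU
  obtain ⟨p, hpU⟩ := (directed_essHull Φ x).exists_subset_of_isCompact
    (fun _ => isClosed_clco _) hp₀ hU hxU
  refine ⟨p.δ / 2, half_pos p.δ_pos, fun y hy => ?_⟩
  have hball : ball y (p.δ / 2) ⊆ ball x p.δ :=
    ball_subset_ball' (by linarith [(mem_ball.1 hy).le])
  calc mPhi Φ y ⊆ essHull Φ y ⟨p.N, p.δ / 2, p.volume_N, half_pos p.δ_pos⟩ :=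
        mPhi_subset_essHull Φ y _
    _ ⊆ essHull Φ x p := essHull_subset_essHull Φ subset_rfl hball
    _ ⊆ U := hpU

lemma isCusco_mPhi (hΦ : IsCusco Φ) : IsCusco (mPhi Φ) :=
  ⟨fun x _ hU hxU => hΦ.mPhi_upperSemicontinuous x hU hxU, fun x =>
    ⟨hΦ.mPhi_nonempty x,
      (hΦ.2 x).2.1.of_isClosed_subset (isClosed_mPhi Φ x)
        ((mPhi_subset_iInter_clco_ball Φ x).trans (hΦ.iInter_clco_ball_subset x)),
      convex_mPhi Φ x⟩⟩

end IsCusco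

/-- Proposition: for a cusco map `Φ`, the map `m(Φ)` is cusco and satisfies
`m(Φ)(x̄) ⊆ ⋂_{δ>0} clco Φ(B_δ(x̄)) ⊆ Φ(x̄)` for all `x̄`. -/
theorem mPhi_cusco_and_subset (d l : ℕ) (Φ : Euc d → Set (Euc l)) (hΦ : IsCusco Φ) :
    IsCusco (mPhi Φ) ∧
    ∀ xbar : Euc d,
      mPhi Φ xbar ⊆ (⋂ (δ : ℝ) (_ : 0 < δ), clco (⋃ a ∈ Metric.ball xbar δ, Φ a)) ∧
      (⋂ (δ : ℝ) (_ : 0 < δ), clco (⋃ a ∈ Metric.ball xbar δ, Φ a)) ⊆ Φ xbar :=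
  ⟨hΦ.isCusco_mPhi, fun xbar => ⟨mPhi_subset_iInter_clco_ball Φ xbar, hΦ.iInter_clco_ball_subset xbar⟩⟩
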